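/- arXiv:1703.07525 — 3 statements merged into one kernel-verified Lean document; each statement's English description precedes it below -/
import Mathlib

section
/- Let n ≥ 1, N = (N_1,…,N_n) ∈ ℕ₀^n and α = (α_1,…,α_n) ∈ ℕ₀^n. Then |L(N,α)| ≥ |K(N,α)|, i.e. the cardinality of the set L(N,α) is at least the cardinality of the set K(N,α). -/
/-!
Each `j ∈ K(N,α)` says that on the tail `[j, n]` the sum of the `α i` equals the sum of the
`N i + 1`. Subtracting the equations of two elements `j < j'` of `K` gives the same
equality on `[j, j')`, and on the last tail the equality holds as it stands; in either case some
index `i` of the block has `α i ≥ N i + 1`, i.e. `i ∈ L`. So every block between consecutive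
elements of `K` (and the block after the last one) contains an element of `L`, and sending `j`
to the least element of `L` above it is strictly increasing on `K`.
-/

/-- The set `K(N,α)` of the paper (the paper's `n` is `n + 1` here; index `j : Fin (n+1)`
corresponds to the paper's `j+1`, so the paper's `n + 1 - j` is `n + 1 - j.val`). -/
def Kset (n : ℕ) (N α : Fin (n + 1) → ℕ) : Finset (Fin (n + 1)) :=
  Finset.univ.filter fun j =>
    (n + 1 - j.val) + ∑ i ∈ Finset.Ici j, N i = ∑ i ∈ Finset.Ici j, α i

/-- The set `L(N,α)` of the paper. -/
def Lset (n : ℕ) (N α : Fin (n + 1) → ℕ) : Finset (Fin (n + 1)) :=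
  Finset.univ.filter fun j => N j + 1 ≤ α j

open Finset

namespace Finset

theorem sum_Ico_add_sum_Ici {ι M : Type*} [LinearOrder ι] [LocallyFiniteOrder ι]
    [LocallyFiniteOrderTop ι] [AddCommMonoid M] {a b : ι} (hab : a ≤ b) (f : ι → M) :
    ∑ i ∈ Ico a b, f i + ∑ i ∈ Ici b, f i = ∑ i ∈ Ici a, f i := by
  rw [← sum_union (disjoint_left.2 fun i hi hi' => (mem_Ico.1 hi).2.not_ge (mem_Ici.1 hi'))]
  congr 1
  rw [← coe_inj, coe_union, coe_Ico, coe_Ici, coe_Ici, Set.Ico_union_Ici_eq_Ici hab]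

theorem card_le_card_of_forall_exists_mem_Ico {ι : Type*} [LinearOrder ι] {K L : Finset ι}
    (h_above : ∀ j ∈ K, ∃ i ∈ L, j ≤ i)
    (h_between : ∀ j ∈ K, ∀ j' ∈ K, j < j' → ∃ i ∈ L, j ≤ i ∧ i < j') :
    #K ≤ #L := by
  have h_least : ∀ j ∈ K, ∃ i ∈ L, j ≤ i ∧ ∀ i' ∈ L, j ≤ i' → i ≤ i' := by
    intro j hj
    obtain ⟨i₀, hi₀L, hji₀⟩ := h_above j hj
    obtain ⟨i, hi, hmin⟩ :=
      (L.filter (j ≤ ·)).exists_min_image id ⟨i₀, mem_filter.2 ⟨hi₀L, hji₀⟩⟩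
    rw [mem_filter] at hi
    exact ⟨i, hi.1, hi.2, fun i' hi'L hji' => hmin i' (mem_filter.2 ⟨hi'L, hji'⟩)⟩
  choose! f hfL hjf hfmin using h_least
  have hf_strictMonoOn : StrictMonoOn f K := by
    intro j hj j' hj' hlt
    obtain ⟨i, hiL, hji, hij'⟩ := h_between j hj j' hj' hlt
    exact ((hfmin j hj i hiL hji).trans_lt hij').trans_le (hjf j' hj')
  exact card_le_card_of_injOn f hfL hf_strictMonoOn.injOn

end Finset

section

variable {n : ℕ} {N α : Fin (n + 1) → ℕ}

theorem mem_Kset_iff {j : Fin (n + 1)} :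
    j ∈ Kset n N α ↔ ∑ i ∈ Ici j, (N i + 1) = ∑ i ∈ Ici j, α i := by
  simp [Kset, sum_add_distrib, Fin.card_Ici, add_comm]

theorem sum_Ico_eq_of_mem_Kset {j j' : Fin (n + 1)} (hj : j ∈ Kset n N α)
    (hj' : j' ∈ Kset n N α) (hle : j ≤ j') :
    ∑ i ∈ Ico j j', (N i + 1) = ∑ i ∈ Ico j j', α i := by
  rw [mem_Kset_iff, ← sum_Ico_add_sum_Ici hle, ← sum_Ico_add_sum_Ici hle (f := α)] at hj
  rw [mem_Kset_iff] at hj'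
  omega

theorem exists_mem_Lset_of_sum_le {s : Finset (Fin (n + 1))} (hs : s.Nonempty)
    (h : ∑ i ∈ s, (N i + 1) ≤ ∑ i ∈ s, α i) : ∃ i ∈ s, i ∈ Lset n N α := by
  obtain ⟨i, hi, hle⟩ := exists_le_of_sum_le hs h
  exact ⟨i, hi, by simpa [Lset] using hle⟩

end

/-- `|L(N,α)| ≥ |K(N,α)|`. -/
theorem stmt2 (n : ℕ) (N α : Fin (n + 1) → ℕ) :
    (Kset n N α).card ≤ (Lset n N α).card := by
  refine card_le_card_of_forall_exists_mem_Ico (fun j hj => ?_) fun j hj j' hj' hlt => ?_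
  · obtain ⟨i, hi, hiL⟩ := exists_mem_Lset_of_sum_le nonempty_Ici (mem_Kset_iff.1 hj).le
    exact ⟨i, hiL, mem_Ici.1 hi⟩
  · obtain ⟨i, hi, hiL⟩ := exists_mem_Lset_of_sum_le (nonempty_Ico.2 hlt)
      (sum_Ico_eq_of_mem_Kset hj hj' hlt.le).le
    exact ⟨i, hiL, mem_Ico.1 hi⟩
end

section
/- Let n ≥ 1, N ∈ ℕ₀^n, α ∈ ℕ₀^n, and θ ∈ ℂ^n with θ_j + ⋯ + θ_n ≠ 0 for all j. With δ, U_δ, G_{N,α,θ} as defined, if |L(N,α)| > |K(N,α)| then the value at t = 0 of the analytic extension of G_{N,α,θ} to U_δ is 0. -/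
/-- Generalized binomial coefficient `binom(z, m) = z(z−1)⋯(z−m+1)/m!`. -/
noncomputable def cbinom (z : ℂ) (m : ℕ) : ℂ :=
  (∏ k ∈ Finset.range m, (z - (k : ℂ))) / (m.factorial : ℂ)

/-- `δ = (1/2) min_j { (1+|θ_j|)⁻¹, |θ_j+⋯+θ_n|⁻¹ }`. -/
noncomputable def deltaOf (n : ℕ) (θ : Fin (n + 1) → ℂ) : ℝ :=
  (1 / 2) *
    Finset.univ.inf' Finset.univ_nonempty fun j : Fin (n + 1) =>
      min (1 + ‖θ j‖)⁻¹ (‖∑ i ∈ Finset.Ici j, θ i‖)⁻¹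

/-- The function `G_{N,α,θ}` of the paper, defined a priori away from `t = 0`. -/
noncomputable def Gfun (n : ℕ) (N α : Fin (n + 1) → ℕ) (θ : Fin (n + 1) → ℂ) (t : ℂ) : ℂ :=
  (∏ j, cbinom ((N j : ℂ) - t * θ j) (α j)) /
    ∏ j : Fin (n + 1),
      (t - ((∑ i ∈ Finset.Ici j, (N i : ℂ)) + ((n : ℂ) + 1 - (j.val : ℂ)) -
            ∑ i ∈ Finset.Ici j, (α i : ℂ)) / ∑ i ∈ Finset.Ici j, θ i)

/-! For `j ∈ L(N,α)` the numerator factor `binom(N_j − tθ_j, α_j)` contains the factor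
`N_j − tθ_j − N_j = −tθ_j`, so it vanishes at `t = 0`; the denominator factor `t − c_j` vanishes
at `0` exactly when `j ∈ K(N,α)`. As a meromorphic function, `G_{N,α,θ}` therefore has order at
least `|L| − |K| > 0` at `0`, so it tends to `0` on the punctured disc, and any continuous
extension takes the value `0` there. -/

open Filter Topology

section MeromorphicOrder

variable {𝕜 : Type*} [NontriviallyNormedField 𝕜]

theorem AnalyticAt.one_le_meromorphicOrderAt {f : 𝕜 → 𝕜} {x : 𝕜} (hf : AnalyticAt 𝕜 f x)
    (hx : f x = 0) : 1 ≤ meromorphicOrderAt f x := by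
  rw [hf.meromorphicOrderAt_eq]
  have : 1 ≤ analyticOrderAt f x :=
    Order.one_le_iff_ne_zero.2 (hf.analyticOrderAt_ne_zero.2 hx)
  cases h : analyticOrderAt f x with
  | top => simp
  | coe m => simp_all

theorem meromorphicOrderAt_sub_const (x c : 𝕜) [Decidable (c = x)] :
    meromorphicOrderAt (· - c) x = if c = x then 1 else 0 := by
  split_ifs with h
  · subst h; exact meromorphicOrderAt_id_sub_const
  · have han : AnalyticAt 𝕜 (· - c) x := by fun_prop
    rw [han.meromorphicOrderAt_eq, han.analyticOrderAt_eq_zero.2 (sub_ne_zero.2 (Ne.symm h))]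
    rfl

theorem card_le_meromorphicOrderAt_prod {ι : Type*} (s : Finset ι) (f : ι → 𝕜 → 𝕜) (x : 𝕜)
    [DecidablePred fun i => f i x = 0] (hf : ∀ i ∈ s, AnalyticAt 𝕜 (f i) x) :
    ((s.filter fun i => f i x = 0).card : WithTop ℤ) ≤
      meromorphicOrderAt (fun t => ∏ i ∈ s, f i t) x := by
  rw [meromorphicOrderAt_fun_prod fun i hi => (hf i hi).meromorphicAt, Finset.card_filter]
  push_cast
  refine Finset.sum_le_sum fun i hi => ?_
  split_ifs with h
  · exact (hf i hi).one_le_meromorphicOrderAt h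
  · exact (hf i hi).meromorphicOrderAt_nonneg

theorem meromorphicOrderAt_prod_sub_const {ι : Type*} (s : Finset ι) (c : ι → 𝕜) (x : 𝕜)
    [DecidablePred fun i => c i = x] :
    meromorphicOrderAt (fun t => ∏ i ∈ s, (t - c i)) x = (s.filter fun i => c i = x).card := by
  rw [meromorphicOrderAt_fun_prod fun i _ => by fun_prop, Finset.card_filter]
  push_cast
  exact Finset.sum_congr rfl fun i _ => meromorphicOrderAt_sub_const x (c i)

end MeromorphicOrder

theorem cbinom_natCast_of_lt {m k : ℕ} (h : m < k) : cbinom m k = 0 := by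
  rw [cbinom, Finset.prod_eq_zero (Finset.mem_range.2 h) (sub_self _), zero_div]

@[fun_prop]
theorem analyticAt_cbinom {f : ℂ → ℂ} {x : ℂ} (hf : AnalyticAt ℂ f x) (m : ℕ) :
    AnalyticAt ℂ (fun t => cbinom (f t) m) x := by
  unfold cbinom
  fun_prop

noncomputable def Gpole (n : ℕ) (N α : Fin (n + 1) → ℕ) (θ : Fin (n + 1) → ℂ)
    (j : Fin (n + 1)) : ℂ :=
  ((∑ i ∈ Finset.Ici j, (N i : ℂ)) + ((n : ℂ) + 1 - (j.val : ℂ)) -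
      ∑ i ∈ Finset.Ici j, (α i : ℂ)) / ∑ i ∈ Finset.Ici j, θ i

section Gfun

variable {n : ℕ} {N α : Fin (n + 1) → ℕ} {θ : Fin (n + 1) → ℂ}

theorem Gfun_eq_div :
    Gfun n N α θ = fun t =>
      (∏ j, cbinom ((N j : ℂ) - t * θ j) (α j)) / ∏ j, (t - Gpole n N α θ j) :=
  rfl

theorem Gpole_eq_zero_iff {j : Fin (n + 1)} (hθ : ∑ i ∈ Finset.Ici j, θ i ≠ 0) :
    Gpole n N α θ j = 0 ↔ j ∈ Kset n N α := by
  have hcast : (n : ℂ) + 1 - (j.val : ℂ) = ((n + 1 - j.val : ℕ) : ℂ) := by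
    rw [Nat.cast_sub j.isLt.le]; push_cast; ring
  rw [Gpole, div_eq_zero_iff, or_iff_left hθ, hcast, sub_eq_zero, add_comm, Kset,
    Finset.mem_filter, and_iff_right (Finset.mem_univ j)]
  exact_mod_cast Iff.rfl

theorem meromorphicOrderAt_Gfun_pos (hθ : ∀ j : Fin (n + 1), ∑ i ∈ Finset.Ici j, θ i ≠ 0)
    (hcard : (Kset n N α).card < (Lset n N α).card) :
    0 < meromorphicOrderAt (Gfun n N α θ) 0 := by
  classical
  have hnum : ((Lset n N α).card : WithTop ℤ) ≤
      meromorphicOrderAt (fun t => ∏ j, cbinom ((N j : ℂ) - t * θ j) (α j)) 0 := by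
    refine le_trans ?_ (card_le_meromorphicOrderAt_prod _ _ 0 fun j _ => by fun_prop)
    refine Nat.mono_cast (Finset.card_le_card fun j hj => ?_)
    have hlt : N j < α j := (Finset.mem_filter.1 hj).2
    simp [cbinom_natCast_of_lt hlt]
  have hden :
      meromorphicOrderAt (fun t => ∏ j, (t - Gpole n N α θ j)) 0 = (Kset n N α).card := by
    rw [meromorphicOrderAt_prod_sub_const]
    congr 2
    ext j
    simp [Gpole_eq_zero_iff (hθ j)]
  rw [Gfun_eq_div, fun_meromorphicOrderAt_div (by fun_prop) (by fun_prop), hden]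
  exact LinearOrderedAddCommGroupWithTop.sub_pos.2
    (Or.inl (lt_of_lt_of_le (by exact_mod_cast hcard) hnum))

end Gfun

theorem deltaOf_pos {n : ℕ} {θ : Fin (n + 1) → ℂ}
    (hθ : ∀ j : Fin (n + 1), ∑ i ∈ Finset.Ici j, θ i ≠ 0) : 0 < deltaOf n θ := by
  refine mul_pos one_half_pos ((Finset.lt_inf'_iff _).2 fun j _ => ?_)
  exact lt_min (inv_pos.2 (by positivity)) (inv_pos.2 (norm_pos_iff.2 (hθ j)))

/-- if `|L(N,α)| > |K(N,α)|` then any analytic extension of `G_{N,α,θ}` to the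
disk `U_δ` vanishes at `t = 0`. -/
theorem stmt4 (n : ℕ) (N α : Fin (n + 1) → ℕ) (θ : Fin (n + 1) → ℂ)
    (hθ : ∀ j : Fin (n + 1), ∑ i ∈ Finset.Ici j, θ i ≠ 0)
    (hcard : (Kset n N α).card < (Lset n N α).card) :
    ∀ G : ℂ → ℂ,
      DifferentiableOn ℂ G (Metric.ball 0 (deltaOf n θ)) →
      (∀ t ∈ Metric.ball (0 : ℂ) (deltaOf n θ), t ≠ 0 → G t = Gfun n N α θ t) →
      G 0 = 0 := by
  intro G hG hGfun
  have hball : Metric.ball (0 : ℂ) (deltaOf n θ) ∈ 𝓝 0 := Metric.ball_mem_nhds 0 (deltaOf_pos hθ)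
  have hGfun_lim : Tendsto (Gfun n N α θ) (𝓝[≠] 0) (𝓝 0) :=
    tendsto_zero_of_meromorphicOrderAt_pos (meromorphicOrderAt_Gfun_pos hθ hcard)
  have hG_eq : Gfun n N α θ =ᶠ[𝓝[≠] 0] G := by
    filter_upwards [mem_nhdsWithin_of_mem_nhds hball, self_mem_nhdsWithin] with t ht ht0
    exact (hGfun t ht ht0).symm
  exact tendsto_nhds_unique
    ((hG.continuousOn.continuousAt hball).tendsto.mono_left nhdsWithin_le_nhds)
    (hGfun_lim.congr' hG_eq)
end

section
/- Let n ≥ 1, N ∈ ℕ₀^n and α ∈ ℕ₀^n. If |L(N,α)| = |K(N,α)| then α ∈ 𝒥(K(N,α), N), and in particular α ∈ {0,1,…,|N|+n}^n where |N| = N_1 + ⋯ + N_n. -/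
/-- The set `𝒥(I,N)` of the paper. -/
def Jset (n : ℕ) (I : Finset (Fin (n + 1))) (N : Fin (n + 1) → ℕ) : Set (Fin (n + 1) → ℕ) :=
  {α | Kset n N α = I ∧ (Lset n N α).card = I.card}

open Finset

theorem Finset.card_lt_card_of_interlaced {ι : Type*} [LinearOrder ι] {K L : Finset ι}
    (h_after : ∀ k ∈ K, ∃ l ∈ L, k ≤ l)
    (h_between : ∀ k ∈ K, ∀ k' ∈ K, k < k' → ∃ l ∈ L, k ≤ l ∧ l < k')
    {l₀ : ι} (hl₀ : l₀ ∈ L) (hl₀_lt : ∀ k ∈ K, l₀ < k) : #K < #L := by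
  have h_first : ∀ k ∈ K, ∃ l ∈ L, k ≤ l ∧ ∀ k' ∈ K, k < k' → l < k' := by
    intro k hk
    have hne : (L.filter (k ≤ ·)).Nonempty := by
      obtain ⟨l, hl, hkl⟩ := h_after k hk
      exact ⟨l, mem_filter.2 ⟨hl, hkl⟩⟩
    obtain ⟨hmemL, hkle⟩ := mem_filter.1 ((L.filter (k ≤ ·)).min'_mem hne)
    refine ⟨_, hmemL, hkle, fun k' hk' hlt => ?_⟩
    obtain ⟨l, hl, hkl, hlk'⟩ := h_between k hk k' hk' hlt
    exact ((L.filter (k ≤ ·)).min'_le l (mem_filter.2 ⟨hl, hkl⟩)).trans_lt hlk'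
  choose! f hfL hkf hf_lt using h_first
  have hinj : Set.InjOn f K := by
    intro a ha b hb hab
    by_contra hne
    rcases lt_or_gt_of_ne hne with hlt | hlt
    · exact (hf_lt a ha b hb hlt).not_ge (hab ▸ hkf b hb)
    · exact (hf_lt b hb a ha hlt).not_ge (hab ▸ hkf a ha)
  have hmaps : Set.MapsTo f K (L.erase l₀) := fun k hk =>
    mem_erase.2 ⟨((hl₀_lt k hk).trans_le (hkf k hk)).ne', hfL k hk⟩
  exact (card_le_card_of_injOn f hmaps hinj).trans_lt (card_erase_lt_of_mem hl₀)

theorem Finset.sum_Ico_add_sum_Ici_s6 {ι M : Type*} [LinearOrder ι] [LocallyFiniteOrder ι]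
    [LocallyFiniteOrderTop ι]     [AddCommMonoid M] (f : ι → M) {a b : ι} (hab : a ≤ b) :
    ∑ i ∈ Ico a b, f i + ∑ i ∈ Ici b, f i = ∑ i ∈ Ici a, f i := by
  have hdisj : Disjoint (Ico a b) (Ici b) :=
    disjoint_left.2 fun _ hi hi' => (mem_Ico.1 hi).2.not_ge (mem_Ici.1 hi')
  rw [← sum_union hdisj]
  congr 1
  exact coe_injective (by push_cast; exact Set.Ico_union_Ici_eq_Ici hab)

section

variable {n : ℕ} {N α : Fin (n + 1) → ℕ}

theorem mem_Kset {j : Fin (n + 1)} :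
    j ∈ Kset n N α ↔ (n + 1 - j.val) + ∑ i ∈ Ici j, N i = ∑ i ∈ Ici j, α i := by
  simp [Kset]

theorem mem_Lset {j : Fin (n + 1)} : j ∈ Lset n N α ↔ N j + 1 ≤ α j := by
  simp [Lset]

theorem exists_mem_Lset_le_of_mem_Kset {k : Fin (n + 1)} (hk : k ∈ Kset n N α) :
    ∃ l ∈ Lset n N α, k ≤ l := by
  rw [mem_Kset] at hk
  have hlt : ∑ i ∈ Ici k, N i < ∑ i ∈ Ici k, α i := by have := k.isLt; omega
  obtain ⟨l, hl, hNl⟩ := exists_lt_of_sum_lt hlt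
  exact ⟨l, mem_Lset.2 hNl, mem_Ici.1 hl⟩

theorem exists_mem_Lset_between_of_mem_Kset {k k' : Fin (n + 1)} (hk : k ∈ Kset n N α)
    (hk' : k' ∈ Kset n N α) (hlt : k < k') : ∃ l ∈ Lset n N α, k ≤ l ∧ l < k' := by
  rw [mem_Kset] at hk hk'
  have hα := sum_Ico_add_sum_Ici_s6 α hlt.le
  have hN := sum_Ico_add_sum_Ici_s6 N hlt.le
  have hsum : ∑ i ∈ Ico k k', N i < ∑ i ∈ Ico k k', α i := by
    have : k.val < k'.val := hlt
    have := k'.isLt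
    omega
  obtain ⟨l, hl, hNl⟩ := exists_lt_of_sum_lt hsum
  obtain ⟨hkl, hlk'⟩ := mem_Ico.1 hl
  exact ⟨l, mem_Lset.2 hNl, hkl, hlk'⟩

theorem exists_mem_Kset_le_of_mem_Lset (hcard : #(Lset n N α) = #(Kset n N α))
    {j : Fin (n + 1)} (hj : j ∈ Lset n N α) : ∃ k ∈ Kset n N α, k ≤ j := by
  by_contra! hlt
  exact (card_lt_card_of_interlaced (fun _ hk => exists_mem_Lset_le_of_mem_Kset hk)
    (fun _ hk _ hk' => exists_mem_Lset_between_of_mem_Kset hk hk') hj hlt).ne' hcard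

theorem le_sum_add_of_mem_Kset {k j : Fin (n + 1)} (hk : k ∈ Kset n N α) (hkj : k ≤ j) :
    α j ≤ ∑ i, N i + (n + 1) := by
  rw [mem_Kset] at hk
  have hαj : α j ≤ ∑ i ∈ Ici k, α i := single_le_sum (fun _ _ => Nat.zero_le _) (mem_Ici.2 hkj)
  have hN : ∑ i ∈ Ici k, N i ≤ ∑ i, N i := sum_le_sum_of_subset (subset_univ _)
  omega

end

/-- if `|L(N,α)| = |K(N,α)|` then `α ∈ 𝒥(K(N,α),N)`, and in particular
`α ∈ {0,…,|N|+n}^n` (here `|N| + n_paper = ∑ N + (n+1)`). -/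
theorem stmt6 (n : ℕ) (N α : Fin (n + 1) → ℕ)
    (hcard : (Lset n N α).card = (Kset n N α).card) :
    α ∈ Jset n (Kset n N α) N ∧ ∀ j, α j ≤ (∑ j, N j) + (n + 1) := by
  refine ⟨⟨rfl, hcard⟩, fun j => ?_⟩
  by_cases hj : j ∈ Lset n N α
  · obtain ⟨k, hk, hkj⟩ := exists_mem_Kset_le_of_mem_Lset hcard hj
    exact le_sum_add_of_mem_Kset hk hkj
  · have hNj : N j ≤ ∑ i, N i := single_le_sum (fun _ _ => Nat.zero_le _) (mem_univ j)
    rw [mem_Lset] at hj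
    omega
end
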